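/- If a signed graph G has a link elimination ordering, then the signed-graphic arrangement A(G) is supersolvable. -/

import Mathlib

open scoped Classical

universe u v

/-! ## Signed graphs -/

/-- A signed graph: a pair of simple graphs (positive and negative parts) on a common
vertex set. -/
structure SignedGraph (V : Type u) where
  pos : SimpleGraph V
  neg : SimpleGraph V

namespace SignedGraph

variable {V : Type u}

/-- Adjacency by an edge of a given sign (`true` = negative edge, `false` = positive edge). -/
def EdgeAdj (G : SignedGraph V) (s : Bool) (u v : V) : Prop :=
  cond s (G.neg.Adj u v) (G.pos.Adj u v)

/-- A cycle of a signed graph: distinct vertices `vert 0, …, vert (n-1)` (`n ≥ 3`) with an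
edge of sign `sgn i` between `vert i` and `vert ((i+1) % n)` for each `i < n`. -/
structure Cycle (G : SignedGraph V) where
  n : ℕ
  three_le : 3 ≤ n
  vert : ℕ → V
  inj : ∀ i j, i < n → j < n → vert i = vert j → i = j
  sgn : ℕ → Bool
  adj : ∀ i, i < n → G.EdgeAdj (sgn i) (vert i) (vert ((i + 1) % n))

/-- A cycle is balanced if it uses an even number of negative edges. -/
def Cycle.Balanced {G : SignedGraph V} (C : G.Cycle) : Prop :=
  Even (((Finset.range C.n).filter fun i => C.sgn i = true).card)

/-- A chord of a cycle: an edge of `G` joining two non-consecutive vertices of the cycle. -/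
def Cycle.IsChord {G : SignedGraph V} (C : G.Cycle) (i j : ℕ) : Prop :=
  i < C.n ∧ j < C.n ∧ i ≠ j ∧ j ≠ (i + 1) % C.n ∧ i ≠ (j + 1) % C.n ∧
    (G.pos.Adj (C.vert i) (C.vert j) ∨ G.neg.Adj (C.vert i) (C.vert j))

/-- The chord of sign `s` between positions `i < j` of the cycle `C` separates `C` into two
balanced cycles (for a balanced cycle it suffices that one of the two pieces is balanced). -/
def Cycle.BalancedChordAt {G : SignedGraph V} (C : G.Cycle) (i j : ℕ) (s : Bool) : Prop :=
  i < j ∧ C.IsChord i j ∧ G.EdgeAdj s (C.vert i) (C.vert j) ∧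
    Even ((((Finset.Ico i j).filter fun k => C.sgn k = true).card) + cond s 1 0) ∧
    Even ((((Finset.range C.n \ Finset.Ico i j).filter fun k => C.sgn k = true).card)
      + cond s 1 0)

/-- The cycle has a balanced chord. -/
def Cycle.HasBalancedChord {G : SignedGraph V} (C : G.Cycle) : Prop :=
  ∃ i j s, C.BalancedChordAt i j s

/-- Condition (I): a signed graph is balanced chordal if every balanced cycle of length at
least four has a balanced chord. -/
def BalancedChordal (G : SignedGraph V) : Prop :=
  ∀ C : G.Cycle, 4 ≤ C.n → C.Balanced → C.HasBalancedChord

/-- The cycle `C` is an induced subgraph of `G`: the only edges of `G` among its vertices are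
the edges of the cycle, each single, with the sign it has in the cycle. -/
def Cycle.IsInduced {G : SignedGraph V} (C : G.Cycle) : Prop :=
  ∀ i j, i < C.n → j < C.n → ∀ s : Bool,
    (G.EdgeAdj s (C.vert i) (C.vert j) ↔
      ((j = (i + 1) % C.n ∧ C.sgn i = s) ∨ (i = (j + 1) % C.n ∧ C.sgn j = s)))

/-- Condition (II): no induced subgraph of `G` is an unbalanced cycle (of length `≥ 3`). -/
def NoInducedUnbalancedCycle (G : SignedGraph V) : Prop :=
  ¬ ∃ C : G.Cycle, C.IsInduced ∧ ¬ C.Balanced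

/-- Switching a signed graph by `ν : V → Bool`. -/
def switch (G : SignedGraph V) (ν : V → Bool) : SignedGraph V where
  pos := SimpleGraph.fromRel fun u w => if ν u = ν w then G.pos.Adj u w else G.neg.Adj u w
  neg := SimpleGraph.fromRel fun u w => if ν u = ν w then G.neg.Adj u w else G.pos.Adj u w

/-- `G` contains an induced copy of the signed graph `H`. -/
def HasInducedCopy {W : Type v} (G : SignedGraph V) (H : SignedGraph W) : Prop :=
  ∃ f : W → V, Function.Injective f ∧
    (∀ a b : W, G.pos.Adj (f a) (f b) ↔ H.pos.Adj a b) ∧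
    (∀ a b : W, G.neg.Adj (f a) (f b) ↔ H.neg.Adj a b)

end SignedGraph

/-- The obstruction graph `G₀` of Figure 1: vertices `0,1,2,3` (= `1,2,3,4` in the paper),
double edges `{0,1}, {2,3}`, positive single edges `{0,3}, {1,3}, {1,2}`, negative single
edge `{0,2}`. -/
def obstruction : SignedGraph (Fin 4) where
  pos := SimpleGraph.fromRel fun a b =>
    (a = 0 ∧ b = 1) ∨ (a = 2 ∧ b = 3) ∨ (a = 0 ∧ b = 3) ∨ (a = 1 ∧ b = 3) ∨ (a = 1 ∧ b = 2)
  neg := SimpleGraph.fromRel fun a b =>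
    (a = 0 ∧ b = 1) ∨ (a = 2 ∧ b = 3) ∨ (a = 0 ∧ b = 2)

namespace SignedGraph

variable {V : Type u}

/-- Condition (III): no induced subgraph of `G` is switching equivalent to the obstruction
graph `G₀`. -/
def NoInducedObstruction (G : SignedGraph V) : Prop :=
  ¬ ∃ ν : Fin 4 → Bool, G.HasInducedCopy (obstruction.switch ν)

/-- The signed graph `G̃ = (G⁺ ∪ G⁻, G⁺ ∩ G⁻)`. -/
def tilde (G : SignedGraph V) : SignedGraph V :=
  ⟨G.pos ⊔ G.neg, G.pos ⊓ G.neg⟩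

/-- The induced subgraph of a signed graph on a set of vertices. -/
def induce (G : SignedGraph V) (W : Set V) : SignedGraph W :=
  ⟨SimpleGraph.induce W G.pos, SimpleGraph.induce W G.neg⟩

/-- A vertex `v` is link simplicial: for any two edges at `v` with distinct other endpoints
there is an edge making a balanced triangle with them. -/
def LinkSimplicial (G : SignedGraph V) (v : V) : Prop :=
  ∀ (u u' : V) (s s' : Bool), u ≠ u' → G.EdgeAdj s v u → G.EdgeAdj s' v u' →
    ∃ s'' : Bool, G.EdgeAdj s'' u u' ∧
      Even ((cond s 1 0 + cond s' 1 0 + cond s'' 1 0 : ℕ))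

/-- A link elimination ordering: an enumeration of the vertices such that each vertex is
link simplicial in the induced subgraph on it and its predecessors. -/
def HasLinkElimOrdering (G : SignedGraph V) [Fintype V] : Prop :=
  ∃ e : Fin (Fintype.card V) ≃ V, ∀ i : Fin (Fintype.card V),
    (G.induce {w : V | ∃ j, j ≤ i ∧ e j = w}).LinkSimplicial ⟨e i, ⟨i, le_refl i, rfl⟩⟩

/-- A complete signed graph `K±`: any two distinct vertices are joined by a double edge. -/
def IsCompleteSigned (G : SignedGraph V) : Prop :=
  ∀ u v : V, u ≠ v → G.pos.Adj u v ∧ G.neg.Adj u v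

end SignedGraph

/-- A threshold graph: it can be built from the one-vertex graph (more generally from the
empty graph) by successively adding isolated or dominating vertices; equivalently there is
an ordering of the vertices in which each vertex is isolated or dominating among its
predecessors. -/
def SimpleGraph.IsThresholdGraph {V : Type u} [Fintype V] (G : SimpleGraph V) : Prop :=
  ∃ e : Fin (Fintype.card V) ≃ V, ∀ i : Fin (Fintype.card V),
    (∀ j, j < i → ¬ G.Adj (e i) (e j)) ∨ (∀ j, j < i → G.Adj (e i) (e j))

/-- A simple graph is chordal if every cycle of length at least four has a chord. -/
def SimpleGraph.IsChordalGraph {V : Type u} (G : SimpleGraph V) : Prop :=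
  ∀ n : ℕ, 4 ≤ n → ∀ v : ℕ → V,
    (∀ i j, i < n → j < n → v i = v j → i = j) →
    (∀ i, i < n → G.Adj (v i) (v ((i + 1) % n))) →
    ∃ i j, i < j ∧ j < n ∧ j ≠ i + 1 ∧ ¬(i = 0 ∧ j = n - 1) ∧ G.Adj (v i) (v j)

/-! ## Hyperplane arrangements -/

noncomputable section Arrangements

/-- The signed-graphic arrangement `A(G)` in `K^V`, given by its defining linear forms:
`x i` for each vertex, `x i - x j` for positive edges and `x i + x j` for negative edges. -/
def signedArr (K : Type u) [Field K] {V : Type v} [Fintype V] (G : SignedGraph V) :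
    Finset ((V → K) →ₗ[K] K) :=
  (Finset.univ.image fun i : V => LinearMap.proj i)
    ∪ ((Finset.univ.filter fun p : V × V => G.pos.Adj p.1 p.2).image fun p =>
        (LinearMap.proj p.1 : (V → K) →ₗ[K] K) - LinearMap.proj p.2)
    ∪ ((Finset.univ.filter fun p : V × V => G.neg.Adj p.1 p.2).image fun p =>
        (LinearMap.proj p.1 : (V → K) →ₗ[K] K) + LinearMap.proj p.2)

/-- The linear polynomial in `K[x_i : i ∈ V]` corresponding to a linear form on `K^V`. -/
def linToPoly (K : Type u) [Field K] {V : Type v} [Fintype V] (φ : (V → K) →ₗ[K] K) :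
    MvPolynomial V K :=
  ∑ i : V, MvPolynomial.C (φ (Pi.single i 1)) * MvPolynomial.X i

/-- The module `D(A)` of logarithmic derivations of an arrangement given by linear forms. -/
def logDerModule (K : Type u) [Field K] {V : Type v} [Fintype V]
    (A : Finset ((V → K) →ₗ[K] K)) :
    Submodule (MvPolynomial V K) (Derivation K (MvPolynomial V K) (MvPolynomial V K)) where
  carrier := {θ | ∀ φ ∈ A, θ (linToPoly K φ) ∈ Ideal.span {linToPoly K φ}}
  add_mem' := by
    intro θ η hθ hη φ hφ
    simpa using Ideal.add_mem _ (hθ φ hφ) (hη φ hφ)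
  zero_mem' := by
    intro φ hφ
    simp
  smul_mem' := by
    intro c θ hθ φ hφ
    simpa [smul_eq_mul] using Ideal.mul_mem_left _ c (hθ φ hφ)

/-- An arrangement is free if its module of logarithmic derivations is free. -/
def ArrIsFree (K : Type u) [Field K] {V : Type v} [Fintype V]
    (A : Finset ((V → K) →ₗ[K] K)) : Prop :=
  Module.Free (MvPolynomial V K) (logDerModule K A)

/-- The intersection lattice: all intersections of subfamilies of a finite family of
subspaces (the empty intersection being the whole space). -/
def interLattice (K : Type u) [Field K] {M : Type v} [AddCommGroup M] [Module K M]
    (H : Finset (Submodule K M)) : Finset (Submodule K M) :=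
  H.powerset.image fun B => B.inf id

/-- The one-variable Möbius function of the intersection lattice `L` (ordered by reverse
inclusion): `μ(whole space) = 1` and `μ(X) = -∑_{Y < X} μ(Y)`. -/
def mobiusFn (K : Type u) [Field K] {M : Type v} [AddCommGroup M] [Module K M]
    [FiniteDimensional K M] (L : Finset (Submodule K M)) (X : Submodule K M) : ℤ :=
  if X = ⊤ then 1
  else - ∑ Y ∈ (L.filter fun Y => X < Y).attach, mobiusFn K L Y.1
termination_by Module.finrank K M - Module.finrank K X
decreasing_by
  have h1 : X < Y.1 := (Finset.mem_filter.mp Y.2).2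
  have h2 : Module.finrank K X < Module.finrank K Y.1 :=
    Submodule.finrank_lt_finrank_of_lt h1
  have h3 : Module.finrank K (Y.1 : Submodule K M) ≤ Module.finrank K M :=
    Submodule.finrank_le Y.1
  omega

/-- The characteristic polynomial `χ(A,t) = ∑_{X ∈ L(A)} μ(X) t^{dim X}` of an arrangement
given by its defining linear forms. -/
def arrCharPoly (K : Type u) [Field K] {M : Type v} [AddCommGroup M] [Module K M]
    [FiniteDimensional K M] (A : Finset (M →ₗ[K] K)) : Polynomial ℤ :=
  ∑ X ∈ interLattice K (A.image LinearMap.ker),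
    Polynomial.C (mobiusFn K (interLattice K (A.image LinearMap.ker)) X) *
      Polynomial.X ^ Module.finrank K X

/-- The restriction `A^H` of the arrangement `A` to the hyperplane `H = ker φ`, given by
the restrictions of the defining forms of the hyperplanes other than `H`. -/
def restrArr (K : Type u) [Field K] {M : Type v} [AddCommGroup M] [Module K M]
    (A : Finset (M →ₗ[K] K)) (φ : M →ₗ[K] K) : Finset (↥(LinearMap.ker φ) →ₗ[K] K) :=
  (A.filter fun ψ => LinearMap.ker ψ ≠ LinearMap.ker φ).image
    fun ψ => ψ ∘ₗ (LinearMap.ker φ).subtype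

/-- Auxiliary fuelled definition of divisional freeness. -/
def DivFreeAux (K : Type u) [Field K] (n : ℕ) (M : Type v) [AddCommGroup M] [Module K M]
    [FiniteDimensional K M] (A : Finset (M →ₗ[K] K)) : Prop :=
  match n with
  | 0 => A = ∅
  | Nat.succ m => A = ∅ ∨ ∃ φ ∈ A, φ ≠ 0 ∧
      DivFreeAux K m ↥(LinearMap.ker φ) (restrArr K A φ) ∧
      arrCharPoly K (restrArr K A φ) ∣ arrCharPoly K A

/-- Divisional freeness: the empty arrangement is divisionally free, and `A` is divisionally
free if some hyperplane `H ∈ A` has `A^H` divisionally free with `χ(A^H,t) ∣ χ(A,t)`.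
(Each restriction drops the dimension by exactly one, so `finrank M` steps suffice.) -/
def ArrIsDivFree (K : Type u) [Field K] {M : Type v} [AddCommGroup M] [Module K M]
    [FiniteDimensional K M] (A : Finset (M →ₗ[K] K)) : Prop :=
  DivFreeAux K (Module.finrank K M) M A

/-- The meet of two elements in the intersection lattice ordered by reverse inclusion:
the smallest member of `L` containing both. -/
def latticeMeet (K : Type u) [Field K] {M : Type v} [AddCommGroup M] [Module K M]
    (L : Finset (Submodule K M)) (x y : Submodule K M) : Submodule K M :=
  (L.filter fun z => x ≤ z ∧ y ≤ z).inf id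

/-- `m` is a modular element of the intersection lattice `L` (ordered by reverse
inclusion): for all `a ≤ b` in `L`, `a ∨ (m ∧ b) = (a ∨ m) ∧ b`. -/
def ModularIn (K : Type u) [Field K] {M : Type v} [AddCommGroup M] [Module K M]
    (L : Finset (Submodule K M)) (m : Submodule K M) : Prop :=
  m ∈ L ∧ ∀ a ∈ L, ∀ b ∈ L, b ≤ a →
    a ⊓ latticeMeet K L m b = latticeMeet K L (a ⊓ m) b

/-- An arrangement is supersolvable if its intersection lattice has a maximal chain of
modular elements. -/
def ArrSupersolvable (K : Type u) [Field K] {M : Type v} [AddCommGroup M] [Module K M]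
    (A : Finset (M →ₗ[K] K)) : Prop :=
  ∃ C : Set (Submodule K M),
    C ⊆ ↑(interLattice K (A.image LinearMap.ker)) ∧
    IsChain (· ≤ ·) C ∧
    (∀ C' : Set (Submodule K M),
        C' ⊆ ↑(interLattice K (A.image LinearMap.ker)) → IsChain (· ≤ ·) C' → C ⊆ C' →
          C' = C) ∧
    ∀ m ∈ C, ModularIn K (interLattice K (A.image LinearMap.ker)) m

end Arrangements

/-!
Let `v₁, …, vₙ` be a link elimination ordering and `X_k = {x | x v₁ = ⋯ = x v_k = 0}`. The `X_k`
form a maximal chain of flats, and each `X_k` is modular because `X_k + Y` is again a flat for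
every flat `Y` (then the modular law of the subspace lattice is the modular identity).
Now `X_k + Y` is the preimage of the projection of `Y` to the coordinates `v₁, …, v_k`, and
we project away `vₙ, vₙ₋₁, …` one at a time. Eliminating `x v` from equations `x v = ±x u`,
`x v = 0` leaves equations `±x u = ±x w` and `x u = 0`; when `u ≠ w` the first is the hyperplane
of an edge `u w` of the right sign, which exists because `v` is link simplicial among the earlier
vertices (the balanced triangle). So the projection of a flat is a flat of the smaller graph.
-/

open Module LinearMap

section IntersectionLattice

variable {K M : Type*} [Field K] [AddCommGroup M] [Module K M]

lemma latticeMeet_eq_sup_of_mem {L : Finset (Submodule K M)} {x y : Submodule K M}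
    (h : x ⊔ y ∈ L) : latticeMeet K L x y = x ⊔ y :=
  le_antisymm (Finset.inf_le (Finset.mem_filter.2 ⟨h, le_sup_left, le_sup_right⟩))
    (Finset.le_inf fun _ hz => sup_le (Finset.mem_filter.1 hz).2.1 (Finset.mem_filter.1 hz).2.2)

lemma inf_mem_interLattice {H : Finset (Submodule K M)} {a b : Submodule K M}
    (ha : a ∈ interLattice K H) (hb : b ∈ interLattice K H) : a ⊓ b ∈ interLattice K H := by
  simp only [interLattice, Finset.mem_image, Finset.mem_powerset] at ha hb ⊢
  obtain ⟨A, hA, rfl⟩ := ha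
  obtain ⟨B, hB, rfl⟩ := hb
  exact ⟨A ∪ B, Finset.union_subset hA hB, Finset.inf_union⟩

lemma modularIn_of_sup_mem {H : Finset (Submodule K M)} {m : Submodule K M}
    (hm : m ∈ interLattice K H) (hsup : ∀ b ∈ interLattice K H, m ⊔ b ∈ interLattice K H) :
    ModularIn K (interLattice K H) m := by
  refine ⟨hm, fun a ha b hb hba => ?_⟩
  have hmod : a ⊓ m ⊔ b = a ⊓ (m ⊔ b) := inf_sup_assoc_of_le m hba
  rw [latticeMeet_eq_sup_of_mem (hsup b hb),
    latticeMeet_eq_sup_of_mem (hmod ▸ inf_mem_interLattice ha (hsup b hb)), hmod]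

lemma arrSupersolvable_of_modular_chain [FiniteDimensional K M] {A : Finset (M →ₗ[K] K)}
    (m : ℕ → Submodule K M) (hm : Antitone m)
    (hrank : ∀ k ≤ finrank K M, finrank K (m k) = finrank K M - k)
    (hmod : ∀ k ≤ finrank K M, ModularIn K (interLattice K (A.image ker)) (m k)) :
    ArrSupersolvable K A := by
  refine ⟨m '' Set.Iic (finrank K M), ?_, hm.isChain_range.mono (Set.image_subset_range _ _),
    fun C _ hC hmC => Set.Subset.antisymm (fun X hX => ?_) hmC, ?_⟩
  · rintro _ ⟨k, hk, rfl⟩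
    exact (hmod k hk).1
  · have hXM : finrank K X ≤ finrank K M := Submodule.finrank_le X
    have hk : finrank K M - finrank K X ≤ finrank K M := Nat.sub_le _ _
    have hrk : finrank K X = finrank K (m (finrank K M - finrank K X)) := by
      rw [hrank _ hk]
      omega
    refine ⟨_, hk, ?_⟩
    rcases hC.total hX (hmC ⟨_, hk, rfl⟩) with h | h
    exacts [(Submodule.eq_of_le_of_finrank_eq h hrk).symm,
      Submodule.eq_of_le_of_finrank_eq h hrk.symm]
  · rintro _ ⟨k, hk, rfl⟩
    exact hmod k hk

end IntersectionLattice

section VanishingOn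

variable {K V : Type*} [Ring K]

variable (K) in
def vanishingOn (S : Set V) : Submodule K (V → K) :=
  Submodule.pi S fun _ : V => (⊥ : Submodule K K)

@[simp]
lemma mem_vanishingOn {S : Set V} {x : V → K} : x ∈ vanishingOn K S ↔ ∀ u ∈ S, x u = 0 :=
  Iff.rfl

lemma vanishingOn_anti {S T : Set V} (h : S ⊆ T) : vanishingOn K T ≤ vanishingOn K S :=
  fun _ hx u hu => hx u (h hu)

@[simp]
lemma vanishingOn_univ : vanishingOn K (Set.univ : Set V) = ⊥ := Submodule.pi_univ_bot

lemma mem_vanishingOn_sup {S : Set V} {Y : Submodule K (V → K)} {x : V → K} :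
    x ∈ vanishingOn K S ⊔ Y ↔ ∃ y ∈ Y, ∀ u ∈ S, x u = y u := by
  rw [Submodule.mem_sup]
  constructor
  · rintro ⟨z, hz, y, hy, rfl⟩
    exact ⟨y, hy, fun u hu => by simp [(mem_vanishingOn.1 hz) u hu]⟩
  · rintro ⟨y, hy, hxy⟩
    refine ⟨x - y, mem_vanishingOn.2 fun u hu => ?_, y, hy, sub_add_cancel x y⟩
    rw [Pi.sub_apply, hxy u hu, sub_self]

lemma vanishingOn_sup_eq_of_dependsOn {S : Set V} {Y : Submodule K (V → K)}
    (hY : DependsOn (· ∈ Y) S) : vanishingOn K S ⊔ Y = Y := by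
  refine le_antisymm (fun x hx => ?_) le_sup_right
  obtain ⟨y, hy, hxy⟩ := mem_vanishingOn_sup.1 hx
  exact (hY hxy).mpr hy

/-- Fourier–Motzkin elimination of the coordinate `x v`. -/
lemma vanishingOn_sup_inf_ker_sub {S : Set V} {v : V} (hv : v ∉ S) {Y₀ : Submodule K (V → K)}
    (hY₀ : DependsOn (· ∈ Y₀) S) {ι : Type*} {s : Finset ι} {g : ι → (V → K) →ₗ[K] K}
    (hg : ∀ i ∈ s, DependsOn (g i) S) {i₀ : ι} (hi₀ : i₀ ∈ s) :
    vanishingOn K S ⊔ (Y₀ ⊓ s.inf fun i => ker (proj v - g i)) =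
      Y₀ ⊓ s.inf fun i => ker (g i₀ - g i) := by
  ext x
  simp only [mem_vanishingOn_sup, Submodule.mem_inf, Submodule.mem_finsetInf, mem_ker,
    LinearMap.sub_apply, proj_apply, sub_eq_zero]
  constructor
  · rintro ⟨y, ⟨hy₀, hyv⟩, hxy⟩
    refine ⟨(hY₀ hxy).mpr hy₀, fun i hi => ?_⟩
    rw [hg i₀ hi₀ hxy, hg i hi hxy, ← hyv i₀ hi₀, hyv i hi]
  · rintro ⟨hx₀, hxg⟩
    have hxy : ∀ u ∈ S, x u = Function.update x v (g i₀ x) u := fun u hu => by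
      rw [Function.update_of_ne (ne_of_mem_of_not_mem hu hv)]
    refine ⟨_, ⟨(hY₀ hxy).mp hx₀, fun i hi => ?_⟩, hxy⟩
    rw [Function.update_self, ← hg i hi hxy, hxg i hi]

end VanishingOn

lemma finrank_vanishingOn {K V : Type*} [DivisionRing K] [Fintype V] (S : Set V) :
    finrank K (vanishingOn K S) = Fintype.card V - Nat.card S := by
  have hker : vanishingOn K S = ker (funLeft K K ((↑) : S → V)) := by
    ext x
    simp [funext_iff]
  have hrange : range (funLeft K K ((↑) : S → V)) = ⊤ :=
    range_eq_top.2 (funLeft_surjective_of_injective K K _ Subtype.val_injective)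
  have hrank : Nat.card S + finrank K (vanishingOn K S) = Fintype.card V := by
    rw [← Fintype.card_eq_nat_card, ← finrank_fintype_fun_eq_card K, ← finrank_top K (S → K),
      ← hrange, hker, finrank_range_add_finrank_ker, finrank_fintype_fun_eq_card]
  omega

namespace SignedGraph

variable {V K : Type*} [Field K] {G : SignedGraph V} {S : Set V} {v : V}

lemma EdgeAdj.symm {s : Bool} {u w : V} (h : G.EdgeAdj s u w) : G.EdgeAdj s w u := by
  cases s
  exacts [SimpleGraph.Adj.symm h, SimpleGraph.Adj.symm h]

lemma EdgeAdj.ne {s : Bool} {u w : V} (h : G.EdgeAdj s u w) : u ≠ w := by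
  cases s
  exacts [SimpleGraph.Adj.ne h, SimpleGraph.Adj.ne h]

variable (G) in
def LinkSimplicialOn (S : Set V) (v : V) : Prop :=
  ∀ ⦃u⦄, u ∈ S → ∀ ⦃w⦄, w ∈ S → ∀ ⦃s t : Bool⦄, u ≠ w → G.EdgeAdj s v u → G.EdgeAdj t v w →
    G.EdgeAdj (xor s t) u w

lemma LinkSimplicial.linkSimplicialOn {W : Set V} {hv : v ∈ W}
    (h : (G.induce W).LinkSimplicial ⟨v, hv⟩) (hS : S ⊆ W) : G.LinkSimplicialOn S v := by
  intro u hu w hw s t huw hsu htw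
  obtain ⟨r, hr, heven⟩ :=
    h ⟨u, hS hu⟩ ⟨w, hS hw⟩ s t (fun h => huw (congrArg Subtype.val h)) hsu htw
  obtain rfl : r = xor s t := by
    revert heven; cases s <;> cases t <;> cases r <;> decide
  exact hr

variable (K)

def edgeSign (s : Bool) : K := cond s (-1) 1

@[simp] lemma edgeSign_false : edgeSign K false = 1 := rfl
@[simp] lemma edgeSign_true : edgeSign K true = -1 := rfl

variable (G)

def hyperplanesOn (S : Set V) : Set (Submodule K (V → K)) :=
  {H | (∃ u ∈ S, H = ker (proj u)) ∨
    ∃ s, ∃ u ∈ S, ∃ w ∈ S, G.EdgeAdj s u w ∧ H = ker (proj u - edgeSign K s • proj w)}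

/-- `Y` is the preimage in `K^V` of a flat of the arrangement `A(G[S])` in `K^S`. -/
def IsFlatOn (S : Set V) (Y : Submodule K (V → K)) : Prop :=
  ∃ B : Finset (Submodule K (V → K)), ↑B ⊆ G.hyperplanesOn K S ∧ B.inf id = Y

def neighbourForms (S : Set V) (v : V) : Set ((V → K) →ₗ[K] K) :=
  {g | g = 0 ∨ ∃ s, ∃ u ∈ S, G.EdgeAdj s v u ∧ g = edgeSign K s • proj u}

variable {K G}

lemma dependsOn_mem_of_mem_hyperplanesOn {H : Submodule K (V → K)}
    (hH : H ∈ G.hyperplanesOn K S) : DependsOn (· ∈ H) S := by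
  intro x y hxy
  rcases hH with ⟨u, hu, rfl⟩ | ⟨s, u, hu, w, hw, -, rfl⟩
  · simp [hxy u hu]
  · simp [hxy u hu, hxy w hw]

lemma dependsOn_of_mem_neighbourForms {g : (V → K) →ₗ[K] K}
    (hg : g ∈ G.neighbourForms K S v) : DependsOn g S := by
  intro x y hxy
  rcases hg with rfl | ⟨s, u, hu, -, rfl⟩
  · simp
  · simp [hxy u hu]

lemma hyperplanesOn_univ [Fintype V] :
    G.hyperplanesOn K Set.univ = ↑((signedArr K G).image ker) := by
  ext H
  simp only [hyperplanesOn, signedArr, Set.mem_univ, true_and, Finset.coe_image, Set.mem_image,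
    Finset.mem_coe, Finset.mem_union, Finset.mem_image, Finset.mem_filter, Finset.mem_univ]
  constructor
  · rintro (⟨u, rfl⟩ | ⟨s, u, w, huw, rfl⟩)
    · exact ⟨proj u, Or.inl (Or.inl ⟨u, rfl⟩), rfl⟩
    · cases s
      · exact ⟨proj u - proj w, Or.inl (Or.inr ⟨(u, w), huw, rfl⟩), by simp⟩
      · exact ⟨proj u + proj w, Or.inr ⟨(u, w), huw, rfl⟩, by ext; simp⟩
  · rintro ⟨φ, ((⟨u, rfl⟩ | ⟨⟨u, w⟩, huw, rfl⟩) | ⟨⟨u, w⟩, huw, rfl⟩), rfl⟩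
    · exact Or.inl ⟨u, rfl⟩
    · exact Or.inr ⟨false, u, w, huw, by simp⟩
    · exact Or.inr ⟨true, u, w, huw, by ext; simp⟩

lemma ker_sub_edgeSign_smul_comm (s : Bool) (u w : V) :
    ker (proj u - edgeSign K s • proj w : (V → K) →ₗ[K] K) =
      ker (proj w - edgeSign K s • proj u : (V → K) →ₗ[K] K) := by
  ext x
  cases s <;> simp [sub_eq_zero, eq_comm, add_comm]

lemma mem_hyperplanesOn_insert (hv : v ∉ S) {H : Submodule K (V → K)}
    (hH : H ∈ G.hyperplanesOn K (insert v S)) :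
    H ∈ G.hyperplanesOn K S ∨ ∃ g ∈ G.neighbourForms K S v, H = ker (proj v - g) := by
  rcases hH with ⟨u, rfl | hu, rfl⟩ | ⟨s, u, rfl | hu, w, rfl | hw, huw, rfl⟩
  · exact Or.inr ⟨0, Or.inl rfl, by rw [sub_zero]⟩
  · exact Or.inl (Or.inl ⟨u, hu, rfl⟩)
  · exact absurd rfl huw.ne
  · exact Or.inr ⟨_, Or.inr ⟨s, w, hw, huw, rfl⟩, rfl⟩
  · exact Or.inr ⟨_, Or.inr ⟨s, u, hu, huw.symm, rfl⟩, ker_sub_edgeSign_smul_comm s u _⟩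
  · exact Or.inl (Or.inr ⟨s, u, hu, w, hw, huw, rfl⟩)

namespace IsFlatOn

lemma top : G.IsFlatOn K S ⊤ := ⟨∅, by simp, rfl⟩

lemma of_mem {H : Submodule K (V → K)} (hH : H ∈ G.hyperplanesOn K S) : G.IsFlatOn K S H :=
  ⟨{H}, by simpa using hH, by simp⟩

lemma inf {Y Z : Submodule K (V → K)} (hY : G.IsFlatOn K S Y) (hZ : G.IsFlatOn K S Z) :
    G.IsFlatOn K S (Y ⊓ Z) := by
  obtain ⟨B, hB, rfl⟩ := hY
  obtain ⟨C, hC, rfl⟩ := hZ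
  exact ⟨B ∪ C, by simpa using And.intro hB hC, Finset.inf_union⟩

lemma finsetInf {ι : Type*} {s : Finset ι} {Y : ι → Submodule K (V → K)}
    (hY : ∀ i ∈ s, G.IsFlatOn K S (Y i)) : G.IsFlatOn K S (s.inf Y) :=
  Finset.inf_induction top (fun _ h₁ _ h₂ => h₁.inf h₂) hY

lemma mono {T : Set V} (hST : S ⊆ T) {Y : Submodule K (V → K)} (hY : G.IsFlatOn K S Y) :
    G.IsFlatOn K T Y := by
  obtain ⟨B, hB, rfl⟩ := hY
  refine ⟨B, fun H hH => ?_, rfl⟩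
  rcases hB hH with ⟨u, hu, rfl⟩ | ⟨s, u, hu, w, hw, huw, rfl⟩
  exacts [Or.inl ⟨u, hST hu, rfl⟩, Or.inr ⟨s, u, hST hu, w, hST hw, huw, rfl⟩]

lemma dependsOn {Y : Submodule K (V → K)} (hY : G.IsFlatOn K S Y) : DependsOn (· ∈ Y) S := by
  obtain ⟨B, hB, rfl⟩ := hY
  refine Finset.inf_induction (p := fun Y : Submodule K (V → K) => DependsOn (· ∈ Y) S)
    (fun _ _ _ => by simp) (fun Y hY Z hZ x y hxy => ?_)
    (fun H hH => dependsOn_mem_of_mem_hyperplanesOn (hB hH))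
  simp only [Submodule.mem_inf, hY hxy, hZ hxy]

end IsFlatOn

lemma isFlatOn_univ_iff [Fintype V] {Y : Submodule K (V → K)} :
    G.IsFlatOn K Set.univ Y ↔ Y ∈ interLattice K ((signedArr K G).image ker) := by
  simp only [IsFlatOn, interLattice, hyperplanesOn_univ, Finset.coe_subset, Finset.mem_image,
    Finset.mem_powerset]

lemma isFlatOn_vanishingOn [Fintype V] : G.IsFlatOn K S (vanishingOn K S) := by
  have : vanishingOn K S = (Finset.univ.filter (· ∈ S)).inf fun u => ker (proj u) := by
    ext x
    simp [Submodule.mem_finsetInf]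
  rw [this]
  exact IsFlatOn.finsetInf fun u hu => .of_mem (Or.inl ⟨u, by simpa using hu, rfl⟩)

lemma isFlatOn_ker_of_apply_eq {u : V} (hu : u ∈ S) (c : K) {φ : (V → K) →ₗ[K] K}
    (hφ : ∀ x, φ x = c * x u) : G.IsFlatOn K S (ker φ) := by
  obtain rfl : φ = c • proj u := LinearMap.ext fun x => by simp [hφ]
  rcases eq_or_ne c 0 with rfl | hc
  · simpa using IsFlatOn.top
  · rw [ker_smul _ _ hc]
    exact .of_mem (Or.inl ⟨u, hu, rfl⟩)

lemma isFlatOn_ker_sub (hlink : G.LinkSimplicialOn S v) {g g' : (V → K) →ₗ[K] K}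
    (hg : g ∈ G.neighbourForms K S v) (hg' : g' ∈ G.neighbourForms K S v) :
    G.IsFlatOn K S (ker (g - g')) := by
  rcases hg with rfl | ⟨s, u, hu, hvu, rfl⟩ <;> rcases hg' with rfl | ⟨t, w, hw, hvw, rfl⟩
  · simpa using IsFlatOn.top
  · exact isFlatOn_ker_of_apply_eq hw (-edgeSign K t) fun x => by simp
  · exact isFlatOn_ker_of_apply_eq hu (edgeSign K s) fun x => by simp
  rcases eq_or_ne u w with rfl | huw
  · exact isFlatOn_ker_of_apply_eq hu (edgeSign K s - edgeSign K t) fun x => by simp [sub_mul]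
  · have hform : edgeSign K s • proj u - edgeSign K t • proj w =
        edgeSign K s • (proj u - edgeSign K (xor s t) • proj w : (V → K) →ₗ[K] K) := by
      ext x
      cases s <;> cases t <;> simp <;> ring
    rw [hform, ker_smul _ _ (by cases s <;> simp [edgeSign])]
    exact .of_mem (Or.inr ⟨_, u, hu, w, hw, hlink hu hw huw hvu hvw, rfl⟩)

theorem IsFlatOn.vanishingOn_sup (hv : v ∉ S) (hlink : G.LinkSimplicialOn S v)
    {Y : Submodule K (V → K)} (hY : G.IsFlatOn K (insert v S) Y) :
    G.IsFlatOn K S (vanishingOn K S ⊔ Y) := by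
  obtain ⟨B, hB, rfl⟩ := hY
  set B₀ := B.filter (· ∈ G.hyperplanesOn K S)
  set B₁ := B.filter (· ∉ G.hyperplanesOn K S)
  have hB₁ : ∀ H ∈ B₁, ∃ g ∈ G.neighbourForms K S v, H = ker (proj v - g) := fun H hH => by
    rw [Finset.mem_filter] at hH
    exact (mem_hyperplanesOn_insert hv (hB hH.1)).resolve_left hH.2
  choose! g hg hgH using hB₁
  have hB₀ : G.IsFlatOn K S (B₀.inf id) := ⟨B₀, fun H hH => (Finset.mem_filter.1 hH).2, rfl⟩
  have hsplit : B.inf id = B₀.inf id ⊓ B₁.inf fun H => ker (proj v - g H) := by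
    rw [← Finset.inf_congr (f := id) rfl hgH, ← Finset.inf_union,
      Finset.filter_union_filter_not_eq]
  rw [hsplit]
  rcases B₁.eq_empty_or_nonempty with hB₁ | ⟨H₀, hH₀⟩
  · rw [hB₁, Finset.inf_empty, inf_top_eq, vanishingOn_sup_eq_of_dependsOn hB₀.dependsOn]
    exact hB₀
  · rw [vanishingOn_sup_inf_ker_sub hv hB₀.dependsOn
      (fun H hH => dependsOn_of_mem_neighbourForms (hg H hH)) hH₀]
    exact hB₀.inf (IsFlatOn.finsetInf fun H hH => isFlatOn_ker_sub hlink (hg H₀ hH₀) (hg H hH))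

end SignedGraph

section LinkEliminationOrdering

variable {V : Type*} {n : ℕ} (e : Fin n ≃ V)

def firstVertices (k : ℕ) : Set V := {v | (e.symm v : ℕ) < k}

lemma firstVertices_mono : Monotone (firstVertices e) :=
  fun _ _ hkl _ hv => lt_of_lt_of_le hv hkl

lemma firstVertices_self : firstVertices e n = Set.univ :=
  Set.eq_univ_of_forall fun v => (e.symm v).isLt

lemma firstVertices_succ {k : ℕ} (hk : k < n) :
    firstVertices e (k + 1) = insert (e ⟨k, hk⟩) (firstVertices e k) := by
  ext v
  change (e.symm v : ℕ) < k + 1 ↔ v = e ⟨k, hk⟩ ∨ (e.symm v : ℕ) < k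
  simp only [← e.symm_apply_eq, Fin.ext_iff]
  omega

lemma apply_notMem_firstVertices {k : ℕ} (hk : k < n) : e ⟨k, hk⟩ ∉ firstVertices e k := by
  simp [firstVertices]

lemma card_firstVertices {k : ℕ} (hk : k ≤ n) : Nat.card (firstVertices e k) = k := by
  calc Nat.card (firstVertices e k) = Nat.card {i : Fin n // i < k} :=
        Nat.card_congr (e.symm.subtypeEquiv fun _ => Iff.rfl)
    _ = k := by rw [Nat.card_eq_fintype_card, Fintype.card_fin_lt_of_le hk]

variable {e} {K : Type*} [Field K] {G : SignedGraph V}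

theorem SignedGraph.IsFlatOn.vanishingOn_firstVertices_sup
    (he : ∀ i : Fin n, G.LinkSimplicialOn (firstVertices e i) (e i)) {Y : Submodule K (V → K)}
    (hY : G.IsFlatOn K Set.univ Y) {k : ℕ} (hk : k ≤ n) :
    G.IsFlatOn K (firstVertices e k) (vanishingOn K (firstVertices e k) ⊔ Y) := by
  induction hk using Nat.decreasingInduction with
  | self => rwa [firstVertices_self, vanishingOn_univ, bot_sup_eq]
  | of_succ k hk ih =>
    have hflat : G.IsFlatOn K (insert (e ⟨k, hk⟩) (firstVertices e k))
        (vanishingOn K (firstVertices e (k + 1)) ⊔ Y) := by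
      rwa [← firstVertices_succ e hk]
    have := hflat.vanishingOn_sup (apply_notMem_firstVertices e hk) (he ⟨k, hk⟩)
    rwa [← sup_assoc,
      sup_eq_left.2 (vanishingOn_anti (K := K) (firstVertices_mono e k.le_succ))] at this

end LinkEliminationOrdering

theorem supersolvable_of_link_elim_general (K : Type) [Field K] {V : Type} [Fintype V]
    (G : SignedGraph V) (h : G.HasLinkElimOrdering) :
    ArrSupersolvable K (signedArr K G) := by
  obtain ⟨e, he⟩ := h
  have hlink (i : Fin (Fintype.card V)) : G.LinkSimplicialOn (firstVertices e i) (e i) :=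
    (he i).linkSimplicialOn fun v hv => ⟨e.symm v, le_of_lt hv, e.apply_symm_apply v⟩
  have hflat {Y : Submodule K (V → K)} {S : Set V} (hY : G.IsFlatOn K S Y) :
      Y ∈ interLattice K ((signedArr K G).image ker) :=
    SignedGraph.isFlatOn_univ_iff.1 (hY.mono (Set.subset_univ S))
  refine arrSupersolvable_of_modular_chain (fun k => vanishingOn K (firstVertices e k))
    (fun k l hkl => vanishingOn_anti (firstVertices_mono e hkl)) (fun k hk => ?_)
    (fun k hk => modularIn_of_sup_mem (hflat SignedGraph.isFlatOn_vanishingOn) fun Y hY => ?_)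
    <;> rw [finrank_fintype_fun_eq_card] at hk
  · rw [finrank_vanishingOn, card_firstVertices e hk, finrank_fintype_fun_eq_card]
  · exact hflat ((SignedGraph.isFlatOn_univ_iff.2 hY).vanishingOn_firstVertices_sup hlink hk)

/-- **Theorem 2.14 (Zaslavsky).** If a signed graph `G` has a link elimination ordering,
then `A(G)` is supersolvable. -/
theorem supersolvable_of_link_elim (K : Type) [Field K] [CharZero K] {V : Type} [Fintype V]
    (G : SignedGraph V) (h : G.HasLinkElimOrdering) :
    ArrSupersolvable K (signedArr K G) :=
  supersolvable_of_link_elim_general K G h
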